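/- arXiv:2309.12513 — 2 statements merged into one kernel-verified Lean document; each statement's English description precedes it below -/
import Mathlib

section
/- Let f : {0,1}^n → {0,1} be monotone (x ≤ y implies f(x) ≤ f(y)). Then the average sensitivity of f, defined as E_{x}[ |{i : f(x) ≠ f(x with bit i flipped)}| ] with x uniform over {0,1}^n, is at most √n. -/
/-!
Encode `f` and the coordinates as signs, `F x = (-1)^(f x)` and `χᵢ x = (-1)^(x i)`. For monotone
`f`, flipping coordinate `i` can only move `f` in the direction of `x i`, so the number of points
where `f` is sensitive to `i` equals the correlation `∑ₓ F x χᵢ x`. Summing over `i`, the total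
sensitivity is `∑ₓ F x L x` with `L = ∑ᵢ χᵢ`, and Cauchy–Schwarz bounds it by
`√(∑ F²) √(∑ L²) = √(2ⁿ) √(n 2ⁿ)`, the second sum coming from the orthogonality of the `χᵢ`.
-/

open Finset Function

variable {ι : Type*} [DecidableEq ι]

def flipAt (i : ι) (x : ι → Bool) : ι → Bool := update x i (!x i)

@[simp]
lemma flipAt_apply_self (i : ι) (x : ι → Bool) : flipAt i x i = !x i := update_self ..

lemma flipAt_apply_of_ne {i j : ι} (h : j ≠ i) (x : ι → Bool) : flipAt i x j = x j :=
  update_of_ne h ..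

lemma flipAt_involutive (i : ι) : Involutive (flipAt i) := by
  intro x
  simp [flipAt]

lemma le_flipAt {i : ι} {x : ι → Bool} (hx : x i = false) : x ≤ flipAt i x := by
  intro j
  by_cases h : j = i
  · subst h
    simp [hx]
  · rw [flipAt_apply_of_ne h]

lemma flipAt_le {i : ι} {x : ι → Bool} (hx : x i = true) : flipAt i x ≤ x := by
  intro j
  by_cases h : j = i
  · subst h
    simp [hx]
  · rw [flipAt_apply_of_ne h]

def boolSign (b : Bool) : ℝ := if b then -1 else 1

@[simp]
lemma boolSign_not (b : Bool) : boolSign (!b) = -boolSign b := by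
  cases b <;> norm_num [boolSign]

@[simp]
lemma boolSign_mul_self (b : Bool) : boolSign b * boolSign b = 1 := by
  cases b <;> norm_num [boolSign]

lemma boolSign_mul_sub_boolSign_flipAt {f : (ι → Bool) → Bool} (hf : Monotone f)
    (i : ι) (x : ι → Bool) :
    boolSign (x i) * (boolSign (f x) - boolSign (f (flipAt i x)))
      = 2 * if f x ≠ f (flipAt i x) then 1 else 0 := by
  cases hx : x i
  · have hle := hf (le_flipAt hx)
    revert hle
    cases f x <;> cases f (flipAt i x) <;> norm_num [boolSign]
  · have hle := hf (flipAt_le hx)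
    revert hle
    cases f x <;> cases f (flipAt i x) <;> norm_num [boolSign]

variable [Fintype ι]

def sensitivity (f : (ι → Bool) → Bool) (x : ι → Bool) : ℕ := #{i | f x ≠ f (flipAt i x)}

lemma sum_comp_flipAt {M : Type*} [AddCommMonoid M] (i : ι) (g : (ι → Bool) → M) :
    ∑ x, g (flipAt i x) = ∑ x, g x :=
  (flipAt_involutive i).bijective.sum_comp g

lemma sum_eq_zero_of_comp_flipAt_eq_neg {i : ι} {g : (ι → Bool) → ℝ}
    (hg : ∀ x, g (flipAt i x) = -g x) : ∑ x, g x = 0 := by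
  have h := sum_comp_flipAt i g
  simp only [hg, sum_neg_distrib] at h
  linarith

lemma sum_boolSign_mul_boolSign (i j : ι) :
    ∑ x : ι → Bool, boolSign (x i) * boolSign (x j) = if i = j then 2 ^ Fintype.card ι else 0 := by
  split_ifs with h
  · subst h
    simp
  · refine sum_eq_zero_of_comp_flipAt_eq_neg (i := i) fun x => ?_
    rw [flipAt_apply_self, flipAt_apply_of_ne (Ne.symm h), boolSign_not, neg_mul]

lemma sum_sq_sum_boolSign :
    ∑ x : ι → Bool, (∑ i, boolSign (x i)) ^ 2 = Fintype.card ι * 2 ^ Fintype.card ι := by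
  simp_rw [sq, sum_mul_sum]
  rw [sum_comm]
  simp_rw [sum_comm (γ := ι → Bool), sum_boolSign_mul_boolSign]
  simp

lemma sum_ite_ne_comp_flipAt {f : (ι → Bool) → Bool} (hf : Monotone f) (i : ι) :
    ∑ x, (if f x ≠ f (flipAt i x) then 1 else 0 : ℝ) = ∑ x, boolSign (f x) * boolSign (x i) := by
  set g : (ι → Bool) → ℝ := fun x => boolSign (f x) * boolSign (x i)
  have h2 : 2 * ∑ x, (if f x ≠ f (flipAt i x) then 1 else 0 : ℝ) = 2 * ∑ x, g x :=
    calc _ = ∑ x, boolSign (x i) * (boolSign (f x) - boolSign (f (flipAt i x))) := by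
          simp only [mul_sum, boolSign_mul_sub_boolSign_flipAt hf]
      _ = ∑ x, g x + ∑ x, g (flipAt i x) := by
          rw [← sum_add_distrib]
          refine sum_congr rfl fun x _ => ?_
          simp only [g, flipAt_apply_self, boolSign_not]
          ring
      _ = 2 * ∑ x, g x := by
          rw [sum_comp_flipAt]
          ring
  linarith

lemma sum_sensitivity_eq {f : (ι → Bool) → Bool} (hf : Monotone f) :
    ∑ x, (sensitivity f x : ℝ) = ∑ x, boolSign (f x) * ∑ i, boolSign (x i) := by
  simp only [sensitivity, card_filter, Nat.cast_sum, Nat.cast_ite, Nat.cast_one, Nat.cast_zero]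
  rw [sum_comm]
  simp_rw [sum_ite_ne_comp_flipAt hf, mul_sum]
  exact sum_comm

theorem sum_sensitivity_le {f : (ι → Bool) → Bool} (hf : Monotone f) :
    ∑ x, (sensitivity f x : ℝ) ≤ 2 ^ Fintype.card ι * √(Fintype.card ι) :=
  calc _ = ∑ x, boolSign (f x) * ∑ i, boolSign (x i) := sum_sensitivity_eq hf
    _ ≤ √(∑ x, boolSign (f x) ^ 2) * √(∑ x : ι → Bool, (∑ i, boolSign (x i)) ^ 2) :=
        Real.sum_mul_le_sqrt_mul_sqrt _ _ _
    _ = √(2 ^ Fintype.card ι) * √(Fintype.card ι * 2 ^ Fintype.card ι) := by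
        rw [sum_sq_sum_boolSign]
        simp [sq]
    _ = 2 ^ Fintype.card ι * √(Fintype.card ι) := by
        have h : (0 : ℝ) ≤ 2 ^ Fintype.card ι := by positivity
        rw [Real.sqrt_mul' _ h, mul_left_comm, Real.mul_self_sqrt h, mul_comm]

/-- the average sensitivity of a monotone Boolean function on `{0,1}^n`
is at most `√n`. -/
theorem stmt_4 (n : ℕ) (f : (Fin n → Bool) → Bool)
    (hmono : ∀ x y : Fin n → Bool, (∀ i, x i ≤ y i) → f x ≤ f y) :
    (∑ x : Fin n → Bool,
        ((Finset.univ.filter fun i : Fin n =>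
            f x ≠ f (Function.update x i (!x i))).card : ℝ)) / 2 ^ n
      ≤ Real.sqrt n := by
  have hf : Monotone f := fun x y => hmono x y
  rw [div_le_iff₀ (by positivity), mul_comm]
  have h := sum_sensitivity_le hf
  rw [Fintype.card_fin] at h
  exact h
end

section
/- Fix c₁ ∈ (0, 0.01), let a be a sufficiently large positive integer, and define h : {0,1}^a → {0,1} by h(x) = 1 if |x| > a/2 + c₁√a, h(x) = 0 if |x| ∈ [a/2 − c₁√a, a/2 + c₁√a], and h(x) = 0 if |x| < a/2 − c₁√a (i.e., h is the indicator of the top band). Define g : {0,1}^a → {0,1} by g(x) = 0 if |x| > a/2 + c₁√a, g(x) = 0 in the middle band, and g(x) = 1 if |x| < a/2 − c₁√a. Then g is Ω(1)-far from monotone: there exist Ω(2^a) disjoint pairs (x, y) with x < y coordinatewise, g(x) = 1, and g(y) = 0. -/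
/-- Hamming weight of a point of `{0,1}^a`. -/
def hammingWt {a : ℕ} (x : Fin a → Bool) : ℕ :=
  (Finset.univ.filter fun i => x i = true).card

/-!
Take as `X` all sets of size at most `K`, the largest integer below `a/2 - c₁√a`. For `2k ≤ a`
the inclusion graph between the levels `k` and `a - k` is biregular of degree `C(a-k, k)`, so
Hall's condition holds and each level `k ≤ K` injects into its supersets of size `a - k`; these
lie above the threshold, so all `2M` points are distinct. By complementation the levels `≤ K` and
`≥ a - K` have equal size, while the `≈ 2c₁√a` middle levels carry at most
`(2c₁√a + 1) C(a, a/2) ≤ (2c₁ + 1/√a) 2^a` points since `C(a, a/2) √a ≤ 2^a`; hence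
`M ≥ 2^a / 4`.
-/

open Finset

-- A weak form of `centralBinom m ∼ 4 ^ m / √(π m)`.
theorem Nat.centralBinom_sq_mul_le (m : ℕ) : m.centralBinom ^ 2 * (3 * m + 1) ≤ 16 ^ m := by
  induction m with
  | zero => simp
  | succ m ih =>
    have hrec := Nat.succ_mul_centralBinom_succ m
    have hpoly : (2 * m + 1) ^ 2 * (3 * m + 4) ≤ 4 * (m + 1) ^ 2 * (3 * m + 1) := by
      ring_nf; omega
    have key : (m + 1) ^ 2 * ((m + 1).centralBinom ^ 2 * (3 * (m + 1) + 1))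
        ≤ (m + 1) ^ 2 * 16 ^ (m + 1) :=
      calc (m + 1) ^ 2 * ((m + 1).centralBinom ^ 2 * (3 * (m + 1) + 1))
          = 4 * ((2 * m + 1) ^ 2 * (3 * m + 4)) * m.centralBinom ^ 2 := by
            rw [← mul_assoc, ← mul_pow, hrec]; ring
        _ ≤ 4 * (4 * (m + 1) ^ 2 * (3 * m + 1)) * m.centralBinom ^ 2 := by gcongr
        _ = 16 * (m + 1) ^ 2 * (m.centralBinom ^ 2 * (3 * m + 1)) := by ring
        _ ≤ 16 * (m + 1) ^ 2 * 16 ^ m := by gcongr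
        _ = (m + 1) ^ 2 * 16 ^ (m + 1) := by ring
    exact Nat.le_of_mul_le_mul_left key (by positivity)

theorem Nat.choose_half_sq_mul_le (n : ℕ) : n.choose (n / 2) ^ 2 * n ≤ 4 ^ n := by
  obtain ⟨m, rfl | rfl⟩ := Nat.even_or_odd' n
  · have h := Nat.centralBinom_sq_mul_le m
    rw [Nat.centralBinom_eq_two_mul_choose] at h
    rw [Nat.mul_div_cancel_left m two_pos, pow_mul]
    calc (2 * m).choose m ^ 2 * (2 * m) ≤ (2 * m).choose m ^ 2 * (3 * m + 1) := by gcongr; omega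
      _ ≤ 16 ^ m := h
      _ = (4 ^ 2) ^ m := by norm_num
  · have h := Nat.centralBinom_sq_mul_le (m + 1)
    have hsplit : (m + 1).centralBinom = 2 * (2 * m + 1).choose m := by
      rw [Nat.centralBinom_eq_two_mul_choose, show 2 * (m + 1) = 2 * m + 1 + 1 by ring,
        Nat.choose_succ_succ', Nat.choose_symm_half]
      ring
    have hdiv : (2 * m + 1) / 2 = m := by omega
    rw [hsplit] at h
    rw [hdiv]
    have : 4 * ((2 * m + 1).choose m ^ 2 * (2 * m + 1)) ≤ 4 * 4 ^ (2 * m + 1) :=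
      calc 4 * ((2 * m + 1).choose m ^ 2 * (2 * m + 1))
          = (2 * (2 * m + 1).choose m) ^ 2 * (2 * m + 1) := by ring
        _ ≤ (2 * (2 * m + 1).choose m) ^ 2 * (3 * (m + 1) + 1) := by gcongr <;> omega
        _ ≤ 16 ^ (m + 1) := h
        _ = 4 * 4 ^ (2 * m + 1) := by
          rw [show (16 : ℕ) = 4 ^ 2 by norm_num, ← pow_mul]; ring
    omega

theorem Nat.choose_half_mul_sqrt_le (n : ℕ) : (n.choose (n / 2) : ℝ) * √n ≤ 2 ^ n := by
  have h : ((n.choose (n / 2) : ℝ) * √n) ^ 2 ≤ (2 ^ n) ^ 2 := by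
    rw [mul_pow, Real.sq_sqrt n.cast_nonneg, ← pow_mul, mul_comm n 2, pow_mul]
    exact_mod_cast Nat.choose_half_sq_mul_le n
  exact le_of_sq_le_sq h (by positivity)

namespace Finset

variable {α : Type*} [Fintype α]

theorem card_filter_card_ge_eq (K : ℕ) :
    #{x : Finset α | Fintype.card α - K ≤ #x} = #{x : Finset α | #x ≤ K} := by
  classical
  refine card_nbij' compl compl (fun x hx => ?_) (fun x hx => ?_) (fun x _ => compl_compl x)
    (fun x _ => compl_compl x)
  all_goals
    simp only [coe_filter, mem_univ, true_and, Set.mem_ofPred_eq, card_compl] at hx ⊢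
    have := card_le_univ x
    omega

theorem card_filter_card_mem_Ioo_le (K : ℕ) :
    #{x : Finset α | K < #x ∧ #x < Fintype.card α - K} ≤
      (Fintype.card α - 2 * K - 1) * (Fintype.card α).choose (Fintype.card α / 2) := by
  calc _ ≤ (Fintype.card α).choose (Fintype.card α / 2) * #(Ioo K (Fintype.card α - K)) := by
        refine card_le_mul_card_image_of_maps_to (f := card) (fun x hx => ?_) _ fun k _ => ?_
        · simpa using (mem_filter.mp hx).2
        · calc _ ≤ #(powersetCard k (univ : Finset α)) :=
                card_le_card fun x hx => mem_powersetCard_univ.mpr (mem_filter.mp hx).2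
            _ ≤ _ := by rw [card_powersetCard, card_univ]; exact Nat.choose_le_middle k _
    _ = _ := by rw [Nat.card_Ioo, mul_comm]; congr 1; omega

theorem two_pow_card_le_two_mul_card_filter_card_le_add (K : ℕ) :
    2 ^ Fintype.card α ≤ 2 * #{x : Finset α | #x ≤ K} +
      (Fintype.card α - 2 * K - 1) * (Fintype.card α).choose (Fintype.card α / 2) := by
  classical
  have hcover : (univ : Finset (Finset α)) ⊆ ({x | #x ≤ K} : Finset (Finset α)) ∪
      ({x | Fintype.card α - K ≤ #x} : Finset (Finset α)) ∪
      ({x | K < #x ∧ #x < Fintype.card α - K} : Finset (Finset α)) := fun x _ => by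
    simp only [mem_union, mem_filter, mem_univ, true_and]
    omega
  calc 2 ^ Fintype.card α = #(univ : Finset (Finset α)) := by rw [card_univ, Fintype.card_finset]
    _ ≤ #{x : Finset α | #x ≤ K} + #{x : Finset α | Fintype.card α - K ≤ #x} +
        #{x : Finset α | K < #x ∧ #x < Fintype.card α - K} := by
      grw [card_le_card hcover, card_union_le, card_union_le]
    _ ≤ _ := by rw [card_filter_card_ge_eq]; grw [card_filter_card_mem_Ioo_le]; omega

section DecidableEq

variable [DecidableEq α]

theorem choose_card_sub_le_card_filter_superset {k : ℕ} (x : Finset α) (hx : #x = k) :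
    (Fintype.card α - k).choose k ≤ #{y : Finset α | x ⊆ y ∧ #y = Fintype.card α - k} := by
  calc _ = #(powersetCard k xᶜ) := by rw [card_powersetCard, card_compl, hx]
    _ ≤ _ := by
      refine card_le_card_of_injOn compl (fun z hz => ?_) compl_injective.injOn
      rw [mem_coe, mem_powersetCard] at hz
      simp only [coe_filter, mem_univ, true_and, Set.mem_ofPred_eq]
      exact ⟨subset_compl_comm.mp hz.1, by rw [card_compl, hz.2]⟩

theorem exists_injective_superset_card_sub {k : ℕ} (hk : 2 * k ≤ Fintype.card α) :
    ∃ f : {x : Finset α // #x = k} → Finset α,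
      Function.Injective f ∧ ∀ x, x.1 ⊆ f x ∧ #(f x) = Fintype.card α - k := by
  set D := (Fintype.card α - k).choose k
  refine (Fintype.all_card_le_filter_rel_iff_exists_injective
      (fun (x : {x : Finset α // #x = k}) y => x.1 ⊆ y ∧ #y = Fintype.card α - k)).mp
    fun A => ?_
  set T : Finset (Finset α) := {y | ∃ x ∈ A, x.1 ⊆ y ∧ #y = Fintype.card α - k}
  suffices #A * D ≤ #T * D from Nat.le_of_mul_le_mul_right this (Nat.choose_pos (by omega))
  refine card_mul_le_card_mul (fun x y => x.1 ⊆ y ∧ #y = Fintype.card α - k) (fun x hx => ?_)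
    (fun y hy => ?_)
  · refine (choose_card_sub_le_card_filter_superset x.1 x.2).trans (card_le_card fun y hy => ?_)
    simp only [mem_filter, mem_univ, true_and, bipartiteAbove, T] at hy ⊢
    exact ⟨⟨x, hx, hy⟩, hy⟩
  · obtain ⟨x₀, -, -, hy⟩ := (mem_filter.mp hy).2
    calc _ ≤ #(powersetCard k y) := by
          refine card_le_card_of_injOn Subtype.val (fun x hx => ?_) Subtype.val_injective.injOn
          simp only [bipartiteBelow, coe_filter, Set.mem_ofPred_eq] at hx
          exact mem_powersetCard.mpr ⟨hx.2.1, x.2⟩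
      _ = D := by rw [card_powersetCard, hy]

theorem exists_injOn_superset_card_sub_of_card_eq {k : ℕ} (hk : 2 * k ≤ Fintype.card α) :
    ∃ f : Finset α → Finset α, Set.InjOn f {x | #x = k} ∧
      ∀ x : Finset α, #x = k → x ⊆ f x ∧ #(f x) = Fintype.card α - k := by
  obtain ⟨f, hf_inj, hf⟩ := exists_injective_superset_card_sub hk
  refine ⟨fun x => if h : #x = k then f ⟨x, h⟩ else x, fun x hx y hy hxy => ?_,
    fun x hx => ?_⟩
  · simp only [Set.mem_ofPred_eq] at hx hy
    simp only [hx, hy, dite_true] at hxy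
    exact congrArg Subtype.val (hf_inj hxy)
  · simpa only [hx, dite_true] using hf ⟨x, hx⟩

theorem exists_injOn_superset_card_sub {K : ℕ} (hK : 2 * K ≤ Fintype.card α) :
    ∃ f : Finset α → Finset α, Set.InjOn f {x | #x ≤ K} ∧
      ∀ x : Finset α, #x ≤ K → x ⊆ f x ∧ #(f x) = Fintype.card α - #x := by
  choose! F hF_inj hF using fun k (hk : k ≤ K) =>
    exists_injOn_superset_card_sub_of_card_eq (α := α) (k := k) (by omega)
  refine ⟨fun x => F #x x, fun x hx y hy hxy => ?_, fun x hx => hF #x hx x rfl⟩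
  simp only [Set.mem_ofPred_eq] at hx hy
  have hcard : #x = #y := by
    have := congrArg card hxy
    rw [(hF #x hx x rfl).2, (hF #y hy y rfl).2] at this
    have := card_le_univ x
    have := card_le_univ y
    omega
  simp only [hcard] at hxy
  exact hF_inj #y hy hcard rfl hxy

theorem exists_ssubset_pairs_of_two_mul_lt {K : ℕ} (hK : 2 * K < Fintype.card α) :
    ∃ X Y : Fin #{x : Finset α | #x ≤ K} → Finset α, (∀ j, X j ⊂ Y j) ∧
      (∀ j, #(X j) ≤ K) ∧ (∀ j, Fintype.card α - K ≤ #(Y j)) ∧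
      Function.Injective (Sum.elim X Y) := by
  obtain ⟨f, hf_inj, hf⟩ := exists_injOn_superset_card_sub hK.le
  set L : Finset (Finset α) := {x | #x ≤ K}
  let e := L.equivFin.symm
  have hX j : #(e j).1 ≤ K := (mem_filter.mp (e j).2).2
  have hY j : Fintype.card α - K ≤ #(f (e j)) := by rw [(hf _ (hX j)).2]; have := hX j; omega
  have hne i j : (e i).1 ≠ f (e j) :=
    ne_of_apply_ne card (by have := hX i; have := hY j; omega)
  refine ⟨fun j => (e j).1, fun j => f (e j), fun j => ?_, hX, hY, ?_⟩
  · exact ssubset_iff_subset_ne.mpr ⟨(hf _ (hX j)).1, hne j j⟩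
  · exact Function.Injective.sumElim (Subtype.val_injective.comp e.injective)
      (fun i j h => e.injective (Subtype.ext (hf_inj (hX i) (hX j) h))) hne

end DecidableEq

end Finset

def Finset.toBoolFun {α : Type*} [DecidableEq α] : Finset α ↪o (α → Bool) :=
  OrderEmbedding.ofMapLEIff (fun s i => decide (i ∈ s)) fun s t => by
    simp [Pi.le_def, Bool.le_iff_imp, subset_iff]

theorem hammingWt_toBoolFun {n : ℕ} (s : Finset (Fin n)) : hammingWt s.toBoolFun = #s := by
  simp [hammingWt, toBoolFun]

theorem exists_nat_lt_le_add_one {τ : ℝ} (hτ : 0 < τ) :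
    ∃ K : ℕ, (K : ℝ) < τ ∧ τ ≤ K + 1 := by
  have h1 : 1 ≤ ⌈τ⌉₊ := Nat.one_le_ceil_iff.mpr hτ
  refine ⟨⌈τ⌉₊ - 1, ?_, ?_⟩ <;> push_cast [Nat.cast_sub h1]
  · linarith [Nat.ceil_lt_add_one hτ.le]
  · linarith [Nat.le_ceil τ]

theorem two_pow_le_four_mul_card_filter_card_le {n K : ℕ} (hn : 10000 ≤ n)
    (hK : ((n - 2 * K - 1 : ℕ) : ℝ) ≤ √n / 50 + 1) :
    2 ^ n ≤ 4 * #{x : Finset (Fin n) | #x ≤ K} := by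
  have hsplit := two_pow_card_le_two_mul_card_filter_card_le_add (α := Fin n) K
  rw [Fintype.card_fin] at hsplit
  have hsqrt : 100 ≤ √n := Real.le_sqrt_of_sq_le (by norm_num; exact_mod_cast hn)
  have hC := Nat.choose_half_mul_sqrt_le n
  have hC' : (n.choose (n / 2) : ℝ) ≤ 2 ^ n / 100 := by
    rw [le_div_iff₀ (by norm_num)]
    exact (mul_le_mul_of_nonneg_left hsqrt (Nat.cast_nonneg _)).trans hC
  have hmid : ((n - 2 * K - 1 : ℕ) : ℝ) * n.choose (n / 2) ≤ 2 ^ n / 50 + 2 ^ n / 100 :=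
    calc ((n - 2 * K - 1 : ℕ) : ℝ) * n.choose (n / 2)
          ≤ (√n / 50 + 1) * n.choose (n / 2) := by gcongr
      _ = n.choose (n / 2) * √n / 50 + n.choose (n / 2) := by ring
      _ ≤ 2 ^ n / 50 + 2 ^ n / 100 := by gcongr
  have : (2 : ℝ) ^ n ≤ 2 * #{x : Finset (Fin n) | #x ≤ K} + (2 ^ n / 50 + 2 ^ n / 100) := by
    grw [← hmid]; exact_mod_cast hsplit
  exact_mod_cast (show (2 : ℝ) ^ n ≤ 4 * #{x : Finset (Fin n) | #x ≤ K} by linarith)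

/-- the indicator `g` of the bottom band
`{x : |x| < a/2 - c₁√a}` is `Ω(1)`-far from monotone: for all large enough `a`
there are `Ω(2^a)` disjoint pairs `x < y` with `g(x) = 1` and `g(y) = 0`. -/
theorem stmt_11 :
    ∃ c : ℝ, 0 < c ∧ ∃ a₀ : ℕ, ∀ a : ℕ, a₀ ≤ a →
      ∀ c₁ : ℝ, 0 < c₁ → c₁ < 0.01 →
        ∃ M : ℕ, c * 2 ^ a ≤ (M : ℝ) ∧
          ∃ X Y : Fin M → (Fin a → Bool),
            (∀ j, X j < Y j) ∧
            (∀ j, (hammingWt (X j) : ℝ) < a / 2 - c₁ * Real.sqrt a) ∧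
            (∀ j, a / 2 - c₁ * Real.sqrt a ≤ (hammingWt (Y j) : ℝ)) ∧
            Function.Injective (Sum.elim X Y) := by
  refine ⟨1 / 4, by norm_num, 10000, fun a ha c₁ hc₁ hc₁' => ?_⟩
  have hsqrt : 100 ≤ √a := Real.le_sqrt_of_sq_le (by norm_num; exact_mod_cast ha)
  have hsqrt_sq : √a * √a = a := Real.mul_self_sqrt a.cast_nonneg
  obtain ⟨K, hKlt, hKge⟩ := exists_nat_lt_le_add_one (τ := a / 2 - c₁ * √a) (by nlinarith)
  have h2K : 2 * K + 1 ≤ a := by exact_mod_cast (show (2 * K : ℝ) < a by nlinarith)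
  obtain ⟨X, Y, hXY, hX, hY, hinj⟩ :=
    exists_ssubset_pairs_of_two_mul_lt (α := Fin a) (K := K) (by rw [Fintype.card_fin]; omega)
  rw [Fintype.card_fin] at hY
  refine ⟨_, ?_, toBoolFun ∘ X, toBoolFun ∘ Y, fun j => toBoolFun.lt_iff_lt.mpr (hXY j),
    fun j => ?_, fun j => ?_, Sum.comp_elim toBoolFun X Y ▸ toBoolFun.injective.comp hinj⟩
  · have hwidth : ((a - 2 * K - 1 : ℕ) : ℝ) ≤ √a / 50 + 1 := by
      rw [Nat.sub_sub, Nat.cast_sub h2K]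
      push_cast
      nlinarith
    have := two_pow_le_four_mul_card_filter_card_le ha hwidth
    rw [one_div_mul_eq_div, div_le_iff₀ (by norm_num)]
    exact_mod_cast this.trans_eq (mul_comm _ _)
  · rw [Function.comp_apply, hammingWt_toBoolFun]
    exact lt_of_le_of_lt (by exact_mod_cast hX j) hKlt
  · rw [Function.comp_apply, hammingWt_toBoolFun]
    have : ((a - K : ℕ) : ℝ) ≤ #(Y j) := by exact_mod_cast hY j
    rw [Nat.cast_sub (by omega)] at this
    nlinarith
end
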